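/- Assume X_1,…,X_n are i.i.d. Bernoulli(1/2) and Y_k = X_k ⊕ V_k, with V_1,…,V_n i.i.d. Bernoulli(α) independent of X^n, where α ∈ (0, 1/2). Let ε_L < 1−α be such that h̲_n(ε)^n = (ε^n − α^n)/((1−α)^n − α^n) for all ε ∈ [ε_L, 1−α] (such ε_L exists). Then for every n ≥ 1 and every ε ∈ [ε_L, 1−α]: h_n^i(ε) ≤ h̲_n(ε) ≤ h_n^i(ε) + α/(2(1−α)). -/

import Mathlib

/-! The lower bound holds because memoryless filters are among all filters. For the upper bound:
guessing `X^n` blindly already succeeds with probability `2^{-n}`, so `h̲_n` vanishes below `1/2`,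
while for `ε ≥ 0` the closed form vanishes only at `ε = α`; hence `ε_L ≥ 1/2`. On `[ε_L, 1-α]` the
closed form gives `h̲_n(ε) ≤ ε/(1-α)`. Both guessing probabilities tensorize over memoryless
filters, so the Z-channel `0 → 1` with crossover `ζ = 2(1-α-ε)/(1-2α)` in every letter has
`P_c(X^n|Z^n) = ε^n` and `P_c(Y^n|Z^n) = ((ε-α)/(1-2α))^n`. Finally
`ε/(1-α) - (ε-α)/(1-2α) = α(1-α-ε)/((1-α)(1-2α)) ≤ α/(2(1-α))` exactly when `ε ≥ 1/2`. -/

open Finset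

/-- `bern p b = p` if `b = true`, and `1 - p` otherwise. -/
noncomputable def bern (p : ℝ) (b : Bool) : ℝ := if b then p else 1 - p

/-- Joint pmf of `(X^n, Y^n)` where `X_1,…,X_n` are i.i.d. `Bernoulli(p)` and
`Y_k = X_k ⊕ V_k` with `V_1,…,V_n` i.i.d. `Bernoulli(α)` independent of `X^n`. -/
noncomputable def jointIID (n : ℕ) (p α : ℝ) :
    (Fin n → Bool) → (Fin n → Bool) → ℝ :=
  fun x y => ∏ k, bern p (x k) * bern α (xor (x k) (y k))

/-- `F` is a channel (row-stochastic matrix) on a finite alphabet. -/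
def IsChannel {V : Type*} [Fintype V] (F : V → V → ℝ) : Prop :=
  (∀ y z, 0 ≤ F y z) ∧ ∀ y, ∑ z, F y z = 1

/-- `P_c(X|Z)` where `Z` is the output of the channel `F` applied to `Y` and
`X – Y – Z` is a Markov chain, for joint pmf `P` of `(X,Y)`. -/
noncomputable def pcXZ {X V : Type*} [Fintype X] [Fintype V] [Nonempty X]
    (P : X → V → ℝ) (F : V → V → ℝ) : ℝ :=
  ∑ z, ⨆ x, ∑ y, P x y * F y z

/-- `P_c(Y|Z)` where `Z` is the output of the channel `F` applied to `Y`. -/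
noncomputable def pcYZ {X V : Type*} [Fintype X] [Fintype V] [Nonempty V]
    (P : X → V → ℝ) (F : V → V → ℝ) : ℝ :=
  ∑ z, ⨆ y, (∑ x, P x y) * F y z

/-- The Z-channel from `y0` to `z0` with crossover probability `ζ`: every `y ≠ y0` is
mapped to itself with probability `1`, while `y0` is mapped to `z0` with probability
`ζ` and to itself with probability `1 − ζ`. -/
noncomputable def Zch {V : Type*} [DecidableEq V] (y0 z0 : V) (ζ : ℝ) : V → V → ℝ :=
  fun y z =>
    if y = y0 then (if z = z0 then ζ else if z = y0 then 1 - ζ else 0)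
    else (if z = y then 1 else 0)

/-- The memoryless privacy filter built from a single binary-input binary-output
channel `W`. -/
noncomputable def memless (n : ℕ) (W : Bool → Bool → ℝ) :
    (Fin n → Bool) → (Fin n → Bool) → ℝ :=
  fun y z => ∏ k, W (y k) (z k)

/-- `h_n^i(ε)`: the best normalized guessing probability `P_c(Y^n|Z^n)^{1/n}` over
memoryless privacy filters satisfying `P_c(X^n|Z^n)^{1/n} ≤ ε`. -/
noncomputable def hMemless (n : ℕ) (p α : ℝ) (ε : ℝ) : ℝ :=
  sSup {u | ∃ W : Bool → Bool → ℝ, (∀ y z, 0 ≤ W y z) ∧ (∀ y, ∑ z, W y z = 1) ∧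
    pcXZ (jointIID n p α) (memless n W) ^ ((n : ℝ)⁻¹) ≤ ε ∧
    u = pcYZ (jointIID n p α) (memless n W) ^ ((n : ℝ)⁻¹)}

/-- `h̲_n(ε)`: the best normalized guessing probability `P_c(Y^n|Z^n)^{1/n}` over all
channels with output alphabet `{0,1}^n` satisfying `P_c(X^n|Z^n)^{1/n} ≤ ε`. -/
noncomputable def hUnderN (n : ℕ) (p α : ℝ) (ε : ℝ) : ℝ :=
  sSup {u | ∃ F : (Fin n → Bool) → (Fin n → Bool) → ℝ, IsChannel F ∧
    pcXZ (jointIID n p α) F ^ ((n : ℝ)⁻¹) ≤ ε ∧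
    u = pcYZ (jointIID n p α) F ^ ((n : ℝ)⁻¹)}

lemma ciSup_bool_eq {α : Type*} [ConditionallyCompleteLinearOrder α] (f : Bool → α) :
    ⨆ b, f b = max (f false) (f true) :=
  le_antisymm (ciSup_le fun b => by cases b <;> simp)
    (max_le (le_ciSup (Finite.bddAbove_range f) _) (le_ciSup (Finite.bddAbove_range f) _))

section Tensorization

variable {ι A B : Type*} [Fintype ι] [Fintype A] [Fintype B]

lemma ciSup_pi_prod [Nonempty A] (f : ι → A → ℝ) (hf : ∀ i a, 0 ≤ f i a) :
    ⨆ x : ι → A, ∏ i, f i (x i) = ∏ i, ⨆ a, f i a := by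
  refine le_antisymm (ciSup_le fun x => prod_le_prod (fun i _ => hf i _)
    fun i _ => le_ciSup (Finite.bddAbove_range _) _) ?_
  choose x hx using fun i => exists_eq_ciSup_of_finite (f := f i)
  simp_rw [← hx]
  exact le_ciSup (Finite.bddAbove_range fun x : ι → A => ∏ i, f i (x i)) x

variable [DecidableEq ι]

lemma sum_ciSup_pi_prod [Nonempty A] (g : A → B → ℝ) (hg : ∀ a b, 0 ≤ g a b) :
    ∑ z : ι → B, ⨆ x : ι → A, ∏ i, g (x i) (z i) = (∑ b, ⨆ a, g a b) ^ Fintype.card ι := by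
  calc ∑ z : ι → B, ⨆ x : ι → A, ∏ i, g (x i) (z i)
      = ∑ z : ι → B, ∏ i, ⨆ a, g a (z i) :=
        sum_congr rfl fun z _ => ciSup_pi_prod (fun i a => g a (z i)) fun _ _ => hg _ _
    _ = ∏ _i : ι, ∑ b, ⨆ a, g a b := (Fintype.prod_sum fun _ b => ⨆ a, g a b).symm
    _ = _ := by rw [prod_const, card_univ]

lemma pcXZ_pi [Nonempty A] (q : A → B → ℝ) (W : B → B → ℝ) (hq : ∀ a b, 0 ≤ q a b)
    (hW : ∀ b c, 0 ≤ W b c) :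
    pcXZ (fun (x : ι → A) (y : ι → B) => ∏ i, q (x i) (y i))
      (fun y z => ∏ i, W (y i) (z i)) = pcXZ q W ^ Fintype.card ι := by
  have inner : ∀ x z : ι → _, ∑ y : ι → B, (∏ i, q (x i) (y i)) * ∏ i, W (y i) (z i)
      = ∏ i, ∑ b, q (x i) b * W b (z i) := by
    intro x z
    simp_rw [Fintype.prod_sum, prod_mul_distrib]
  simp_rw [pcXZ, inner]
  exact sum_ciSup_pi_prod _ fun a c => sum_nonneg fun b _ => mul_nonneg (hq a b) (hW b c)

lemma pcYZ_pi [Nonempty B] (q : A → B → ℝ) (W : B → B → ℝ) (hq : ∀ a b, 0 ≤ q a b)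
    (hW : ∀ b c, 0 ≤ W b c) :
    pcYZ (fun (x : ι → A) (y : ι → B) => ∏ i, q (x i) (y i))
      (fun y z => ∏ i, W (y i) (z i)) = pcYZ q W ^ Fintype.card ι := by
  have inner : ∀ y z : ι → B, (∑ x : ι → A, ∏ i, q (x i) (y i)) * ∏ i, W (y i) (z i)
      = ∏ i, (∑ a, q a (y i)) * W (y i) (z i) := by
    intro y z
    rw [prod_mul_distrib, Fintype.prod_sum]
  simp_rw [pcYZ, inner]
  exact sum_ciSup_pi_prod _ fun b c => mul_nonneg (sum_nonneg fun a _ => hq a b) (hW b c)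

end Tensorization

section GuessingProbability

variable {X V : Type*} [Fintype X] [Fintype V]

lemma pcYZ_nonneg [Nonempty V] {P : X → V → ℝ} {F : V → V → ℝ} (hP : ∀ x y, 0 ≤ P x y)
    (hF : ∀ y z, 0 ≤ F y z) : 0 ≤ pcYZ P F := by
  obtain ⟨y⟩ := ‹Nonempty V›
  exact sum_nonneg fun z _ => (mul_nonneg (sum_nonneg fun x _ => hP x y) (hF y z)).trans
    (le_ciSup (Finite.bddAbove_range fun y => (∑ x, P x y) * F y z) y)

lemma pcYZ_le_one [Nonempty V] {P : X → V → ℝ} {F : V → V → ℝ} (hP : ∀ x y, 0 ≤ P x y)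
    (hF : IsChannel F) (hP1 : ∑ x, ∑ y, P x y = 1) : pcYZ P F ≤ 1 :=
  calc pcYZ P F ≤ ∑ z, ∑ y, (∑ x, P x y) * F y z :=
        sum_le_sum fun z _ => ciSup_le fun y => single_le_sum
          (fun y _ => mul_nonneg (sum_nonneg fun x _ => hP x y) (hF.1 y z)) (mem_univ y)
    _ = 1 := by
        rw [sum_comm]
        simp_rw [← mul_sum, hF.2, mul_one]
        rw [sum_comm, hP1]

lemma inv_card_le_pcXZ [Nonempty X] {P : X → V → ℝ} {F : V → V → ℝ}
    (hF : ∀ y, ∑ z, F y z = 1) (hP1 : ∑ x, ∑ y, P x y = 1) :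
    (Fintype.card X : ℝ)⁻¹ ≤ pcXZ P F := by
  have hcard : (0 : ℝ) < Fintype.card X := by exact_mod_cast Fintype.card_pos
  have hmass : ∑ z, ∑ x, ∑ y, P x y * F y z = 1 := by
    rw [sum_comm]
    simp_rw [sum_comm (γ := V) (s := univ) (t := univ) (f := fun z y => P _ y * F y z),
      ← mul_sum, hF, mul_one, hP1]
  rw [inv_le_iff_one_le_mul₀ hcard, ← hmass, pcXZ, sum_mul]
  refine sum_le_sum fun z _ => ?_
  calc ∑ x, ∑ y, P x y * F y z ≤ ∑ _x : X, ⨆ x', ∑ y, P x' y * F y z :=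
        sum_le_sum fun x _ =>
          le_ciSup (Finite.bddAbove_range fun x' => ∑ y, P x' y * F y z) x
    _ = _ := by rw [sum_const, card_univ, nsmul_eq_mul']

end GuessingProbability

lemma sub_div_sub_le_div {a b c : ℝ} (hc : 0 ≤ c) (hab : a ≤ b) (hcb : c < b) :
    (a - c) / (b - c) ≤ a / b := by
  rw [div_le_div_iff₀ (sub_pos.2 hcb) (hc.trans_lt hcb)]
  nlinarith

lemma Zch_isChannel {V : Type*} [Fintype V] [DecidableEq V] {y0 z0 : V} {ζ : ℝ}
    (hz0 : z0 ≠ y0) (hζ : ζ ∈ Set.Icc 0 1) : IsChannel (Zch y0 z0 ζ) := by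
  obtain ⟨hζ0, hζ1⟩ := hζ
  refine ⟨fun y z => ?_, fun y => ?_⟩
  · unfold Zch; split_ifs <;> linarith
  · by_cases hy : y = y0
    · simp [Zch, hy, sum_ite, filter_eq', hz0.symm]
    · simp [Zch, hy]

noncomputable def jointBit (p α : ℝ) (a b : Bool) : ℝ := bern p a * bern α (xor a b)

section Product

variable {n : ℕ} {p α : ℝ}

lemma jointBit_nonneg (hp : p ∈ Set.Icc 0 1) (hα : α ∈ Set.Icc 0 1) (a b : Bool) :
    0 ≤ jointBit p α a b := by
  obtain ⟨hp0, hp1⟩ := hp; obtain ⟨hα0, hα1⟩ := hα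
  unfold jointBit bern; split_ifs <;> nlinarith

lemma jointIID_nonneg (hp : p ∈ Set.Icc 0 1) (hα : α ∈ Set.Icc 0 1) (x y : Fin n → Bool) :
    0 ≤ jointIID n p α x y :=
  prod_nonneg fun k _ => jointBit_nonneg hp hα (x k) (y k)

lemma sum_jointIID (n : ℕ) (p α : ℝ) : ∑ x, ∑ y, jointIID n p α x y = 1 :=
  calc ∑ x, ∑ y, jointIID n p α x y = ∑ x : Fin n → Bool, ∏ k, ∑ b, jointBit p α (x k) b :=
        sum_congr rfl fun x _ => (Fintype.prod_sum fun k b => jointBit p α (x k) b).symm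
    _ = ∏ _k : Fin n, ∑ a, ∑ b, jointBit p α a b :=
        (Fintype.prod_sum fun _ a => ∑ b, jointBit p α a b).symm
    _ = 1 := prod_eq_one fun _ _ => by simp [jointBit, bern]; ring

lemma memless_isChannel {W : Bool → Bool → ℝ} (hW : IsChannel W) : IsChannel (memless n W) :=
  ⟨fun _ _ => prod_nonneg fun _ _ => hW.1 _ _,
    fun y => (Fintype.prod_sum fun k c => W (y k) c).symm.trans
      (prod_eq_one fun k _ => hW.2 (y k))⟩

lemma pcXZ_jointIID_memless (hp : p ∈ Set.Icc 0 1) (hα : α ∈ Set.Icc 0 1)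
    {W : Bool → Bool → ℝ} (hW : ∀ b c, 0 ≤ W b c) :
    pcXZ (jointIID n p α) (memless n W) = pcXZ (jointBit p α) W ^ n :=
  (pcXZ_pi (ι := Fin n) _ W (jointBit_nonneg hp hα) hW).trans (by rw [Fintype.card_fin])

lemma pcYZ_jointIID_memless (hp : p ∈ Set.Icc 0 1) (hα : α ∈ Set.Icc 0 1)
    {W : Bool → Bool → ℝ} (hW : ∀ b c, 0 ≤ W b c) :
    pcYZ (jointIID n p α) (memless n W) = pcYZ (jointBit p α) W ^ n :=
  (pcYZ_pi (ι := Fin n) _ W (jointBit_nonneg hp hα) hW).trans (by rw [Fintype.card_fin])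

lemma pcYZ_jointIID_le_one (hp : p ∈ Set.Icc 0 1) (hα : α ∈ Set.Icc 0 1)
    {F : (Fin n → Bool) → (Fin n → Bool) → ℝ} (hF : IsChannel F) :
    pcYZ (jointIID n p α) F ^ (n⁻¹ : ℝ) ≤ 1 :=
  Real.rpow_le_one (pcYZ_nonneg (jointIID_nonneg hp hα) hF.1)
    (pcYZ_le_one (jointIID_nonneg hp hα) hF (sum_jointIID n p α)) (by positivity)

end Product

section Privacy

variable {n : ℕ} {p α ε : ℝ}

lemma hUnderN_nonneg (hp : p ∈ Set.Icc 0 1) (hα : α ∈ Set.Icc 0 1) : 0 ≤ hUnderN n p α ε :=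
  Real.sSup_nonneg fun _ ⟨_, hF, _, hu⟩ =>
    hu ▸ Real.rpow_nonneg (pcYZ_nonneg (jointIID_nonneg hp hα) hF.1) _

lemma le_hUnderN (hp : p ∈ Set.Icc 0 1) (hα : α ∈ Set.Icc 0 1)
    {F : (Fin n → Bool) → (Fin n → Bool) → ℝ} (hF : IsChannel F)
    (hX : pcXZ (jointIID n p α) F ^ (n⁻¹ : ℝ) ≤ ε) :
    pcYZ (jointIID n p α) F ^ (n⁻¹ : ℝ) ≤ hUnderN n p α ε :=
  le_csSup ⟨1, by rintro _ ⟨G, hG, -, rfl⟩; exact pcYZ_jointIID_le_one hp hα hG⟩ ⟨F, hF, hX, rfl⟩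

lemma le_hMemless (hp : p ∈ Set.Icc 0 1) (hα : α ∈ Set.Icc 0 1)
    {W : Bool → Bool → ℝ} (hW : IsChannel W)
    (hX : pcXZ (jointIID n p α) (memless n W) ^ (n⁻¹ : ℝ) ≤ ε) :
    pcYZ (jointIID n p α) (memless n W) ^ (n⁻¹ : ℝ) ≤ hMemless n p α ε :=
  le_csSup ⟨1, by
      rintro _ ⟨V, hV0, hV1, -, rfl⟩
      exact pcYZ_jointIID_le_one hp hα (memless_isChannel ⟨hV0, hV1⟩)⟩
    ⟨W, hW.1, hW.2, hX, rfl⟩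

lemma hMemless_le_hUnderN (hp : p ∈ Set.Icc 0 1) (hα : α ∈ Set.Icc 0 1) :
    hMemless n p α ε ≤ hUnderN n p α ε :=
  Real.sSup_le (fun _ ⟨_, hW0, hW1, hX, hu⟩ =>
      hu ▸ le_hUnderN hp hα (memless_isChannel ⟨hW0, hW1⟩) hX)
    (hUnderN_nonneg hp hα)

lemma hUnderN_eq_zero_of_lt_half (hn : n ≠ 0) (hε : ε < 1 / 2) : hUnderN n p α ε = 0 := by
  refine (congrArg sSup (Set.eq_empty_of_forall_notMem ?_)).trans Real.sSup_empty
  rintro _ ⟨F, hF, hX, -⟩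
  have hblind := inv_card_le_pcXZ hF.2 (sum_jointIID n p α)
  rw [Fintype.card_fun, Fintype.card_bool, Fintype.card_fin, Nat.cast_pow, ← inv_pow] at hblind
  have := (Real.rpow_le_rpow (by positivity) hblind (by positivity : (0 : ℝ) ≤ (n : ℝ)⁻¹))
  rw [Real.pow_rpow_inv_natCast (by norm_num) hn] at this
  linarith

lemma half_le_of_hUnderN_pow_eq {εL : ℝ} (hα : α ∈ Set.Ioo 0 (1 / 2)) (hn : n ≠ 0)
    (hform : ∀ ε ∈ Set.Icc εL (1 - α),
      hUnderN n p α ε ^ n = (ε ^ n - α ^ n) / ((1 - α) ^ n - α ^ n)) :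
    1 / 2 ≤ εL := by
  obtain ⟨hα0, hα2⟩ := hα
  have hD : (1 - α) ^ n - α ^ n ≠ 0 :=
    (sub_pos.2 (pow_lt_pow_left₀ (by linarith) hα0.le hn)).ne'
  have eq_α : ∀ ε, εL ≤ ε → 0 ≤ ε → ε < 1 / 2 → ε = α := by
    intro ε hεL hε0 hε
    have h := hform ε ⟨hεL, by linarith⟩
    rwa [hUnderN_eq_zero_of_lt_half hn hε, zero_pow hn, eq_comm, div_eq_zero_iff,
      or_iff_left hD, sub_eq_zero, pow_left_inj₀ hε0 hα0.le hn] at h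
  by_contra! h
  set m := max εL 0
  have hm : m < 1 / 2 := max_lt h (by norm_num)
  have e₁ := eq_α (m + (1 / 2 - m) / 3) (by linarith [le_max_left εL 0])
    (by linarith [le_max_right εL 0]) (by linarith)
  have e₂ := eq_α (m + 2 * (1 / 2 - m) / 3) (by linarith [le_max_left εL 0])
    (by linarith [le_max_right εL 0]) (by linarith)
  linarith

lemma hUnderN_le_div_of_pow_eq (hp : p ∈ Set.Icc 0 1) (hα : α ∈ Set.Ioo 0 (1 / 2))
    (hn : n ≠ 0) (hε : ε ∈ Set.Icc 0 (1 - α))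
    (h : hUnderN n p α ε ^ n = (ε ^ n - α ^ n) / ((1 - α) ^ n - α ^ n)) :
    hUnderN n p α ε ≤ ε / (1 - α) := by
  obtain ⟨hα0, hα2⟩ := hα
  obtain ⟨hε0, hε1⟩ := hε
  rw [← pow_le_pow_iff_left₀ (hUnderN_nonneg hp ⟨hα0.le, by linarith⟩)
    (div_nonneg hε0 (by linarith)) hn, h, div_pow]
  exact sub_div_sub_le_div (pow_nonneg hα0.le n) (pow_le_pow_left₀ hε0 hε1 n)
    (pow_lt_pow_left₀ (by linarith) hα0.le hn)

lemma pcXZ_jointBit_Zch (hα : α ≤ 1 / 2) {ζ : ℝ} (hζ : ζ ≤ 1) :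
    pcXZ (jointBit (1 / 2) α) (Zch false true ζ) = 1 - α - ζ * (1 - 2 * α) / 2 := by
  simp only [pcXZ, Fintype.sum_bool, ciSup_bool_eq, jointBit, bern, Zch, Bool.false_eq_true,
    Bool.true_eq_false, ↓reduceIte, Bool.bne_true, Bool.bne_false,
    Bool.not_false, Bool.not_true, mul_one, mul_zero]
  rw [max_eq_right (by nlinarith), max_eq_left (by nlinarith)]
  ring

lemma pcYZ_jointBit_Zch {ζ : ℝ} (hζ : ζ ≤ 1) :
    pcYZ (jointBit (1 / 2) α) (Zch false true ζ) = 1 - ζ / 2 := by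
  simp only [pcYZ, Fintype.sum_bool, ciSup_bool_eq, jointBit, bern, Zch, Bool.false_eq_true,
    Bool.true_eq_false, ↓reduceIte, Bool.bne_true, Bool.bne_false, bne_self_eq_false,
    Bool.not_false, mul_one, mul_zero]
  rw [max_eq_right (by nlinarith), max_eq_left (by nlinarith)]
  ring

lemma sub_div_le_hMemless (hα : α ∈ Set.Ioo 0 (1 / 2)) (hn : n ≠ 0)
    (hε : ε ∈ Set.Icc (1 / 2) (1 - α)) :
    (ε - α) / (1 - 2 * α) ≤ hMemless n (1 / 2) α ε := by
  obtain ⟨hα0, hα2⟩ := hα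
  obtain ⟨hε2, hε1⟩ := hε
  have h12 : 0 < 1 - 2 * α := by linarith
  have hp : (1 / 2 : ℝ) ∈ Set.Icc 0 1 := by norm_num
  have hα' : α ∈ Set.Icc 0 1 := ⟨hα0.le, by linarith⟩
  set ζ := 2 * (1 - α - ε) / (1 - 2 * α) with hζ
  have hζ1 : ζ ≤ 1 := by rw [hζ, div_le_one h12]; linarith
  have hW : IsChannel (Zch false true ζ) :=
    Zch_isChannel Bool.true_eq_false.mp ⟨div_nonneg (by linarith) h12.le, hζ1⟩
  have hX : pcXZ (jointBit (1 / 2) α) (Zch false true ζ) = ε := by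
    rw [pcXZ_jointBit_Zch hα2.le hζ1, hζ, div_mul_cancel₀ _ h12.ne']; ring
  have hY : pcYZ (jointBit (1 / 2) α) (Zch false true ζ) = (ε - α) / (1 - 2 * α) := by
    rw [pcYZ_jointBit_Zch hζ1, hζ]; field_simp; ring
  have h := le_hMemless (n := n) (ε := ε) hp hα' hW (by
    rw [pcXZ_jointIID_memless hp hα' hW.1, hX, Real.pow_rpow_inv_natCast (by linarith) hn])
  rwa [pcYZ_jointIID_memless hp hα' hW.1, hY,
    Real.pow_rpow_inv_natCast (div_nonneg (by linarith) h12.le) hn] at h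

end Privacy

/-- Corollary 3, case `p = 1/2`: for every `n ≥ 1` and every
`ε ∈ [ε_L n, 1−α]`, `h_n^i(ε) ≤ h̲_n(ε) ≤ h_n^i(ε) + α/(2(1−α))`, where `ε_L n` is
as in Theorem 4 (i.e., the closed-form formula for `h̲_n` holds on `[ε_L n, 1−α]`). -/
theorem gap_upper_bound_uniform (α : ℝ) (hα : α ∈ Set.Ioo (0 : ℝ) (1 / 2))
    (εL : ℕ → ℝ)
    (hεL : ∀ n, 0 < n → εL n < 1 - α ∧
      ∀ ε ∈ Set.Icc (εL n) (1 - α),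
        hUnderN n (1 / 2) α ε ^ n = (ε ^ n - α ^ n) / ((1 - α) ^ n - α ^ n)) :
    ∀ n, 1 ≤ n → ∀ ε ∈ Set.Icc (εL n) (1 - α),
      hMemless n (1 / 2) α ε ≤ hUnderN n (1 / 2) α ε ∧
      hUnderN n (1 / 2) α ε ≤ hMemless n (1 / 2) α ε + α / (2 * (1 - α)) := by
  intro n hn ε hε
  have hn0 : n ≠ 0 := by omega
  have hp : (1 / 2 : ℝ) ∈ Set.Icc 0 1 := by norm_num
  have hα' : α ∈ Set.Icc 0 1 := ⟨hα.1.le, by linarith [hα.2]⟩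
  obtain ⟨-, hform⟩ := hεL n hn
  have hε2 : 1 / 2 ≤ ε := (half_le_of_hUnderN_pow_eq hα hn0 hform).trans hε.1
  refine ⟨hMemless_le_hUnderN hp hα', ?_⟩
  calc hUnderN n (1 / 2) α ε ≤ ε / (1 - α) :=
        hUnderN_le_div_of_pow_eq hp hα hn0 ⟨by linarith, hε.2⟩ (hform ε hε)
    _ ≤ (ε - α) / (1 - 2 * α) + α / (2 * (1 - α)) := by
        obtain ⟨hα0, hα2⟩ := hα
        rw [div_add_div _ _ (by linarith) (by linarith), div_le_div_iff₀ (by linarith)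
          (by nlinarith)]
        nlinarith [mul_nonneg hα0.le (sub_nonneg.2 hε2)]
    _ ≤ hMemless n (1 / 2) α ε + α / (2 * (1 - α)) := by
        gcongr
        exact sub_div_le_hMemless hα hn0 ⟨hε2, hε.2⟩
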